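/- Let d ≥ 3 and λ ∈ [-2√(d-1), 2√(d-1)], and let φ(n) be the covariance function of the Gaussian wave process on T_d (as defined via Chebyshev polynomials). Then the linear combination (d + λ²)·φ(0) - 2dλ·φ(1) + d(d-1)·φ(2) = 0. -/

import Mathlib

noncomputable def chebU (n : ℤ) (x : ℝ) : ℝ :=
  (Polynomial.Chebyshev.U ℝ n).eval x

noncomputable def phi (d : ℕ) (l : ℝ) (n : ℕ) : ℝ :=
  ((d : ℝ) - 1) ^ (-(n : ℝ) / 2) *
    (((d : ℝ) - 1) / d * chebU (n : ℤ) (l / (2 * Real.sqrt ((d : ℝ) - 1)))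
      - 1 / d * chebU ((n : ℤ) - 2) (l / (2 * Real.sqrt ((d : ℝ) - 1))))

/-! The identity is a polynomial identity once `φ(0)`, `φ(1)`, `φ(2)` are computed in closed form:
`φ(0) = 1`, `φ(1) = λ/d` and `φ(2) = (λ² - d)/(d(d-1))`. -/

open Polynomial.Chebyshev

namespace chebU

variable (x : ℝ)

@[simp] lemma neg_two : chebU (-2) x = -1 := by simp [chebU]

@[simp] lemma neg_one : chebU (-1) x = 0 := by simp [chebU]

@[simp] lemma zero : chebU 0 x = 1 := by simp [chebU]

@[simp] lemma one : chebU 1 x = 2 * x := by simp [chebU]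

@[simp] lemma two : chebU 2 x = 4 * x ^ 2 - 1 := by simp [chebU, U_two]

end chebU

lemma phi_zero {d : ℕ} (hd : d ≠ 0) (l : ℝ) : phi d l 0 = 1 := by
  have hd' : (d : ℝ) ≠ 0 := by exact_mod_cast hd
  norm_num [phi]
  field_simp
  ring

lemma phi_one {d : ℕ} (hd : 1 < d) (l : ℝ) : phi d l 1 = l / d := by
  have hpos : (0 : ℝ) < d - 1 := by simp [sub_pos, hd]
  norm_num [phi, Real.rpow_neg hpos.le, ← Real.sqrt_eq_rpow]
  field_simp
  rw [Real.sq_sqrt hpos.le]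

lemma phi_two {d : ℕ} (hd : 1 < d) (l : ℝ) : phi d l 2 = (l ^ 2 - d) / (d * (d - 1)) := by
  have hpos : (0 : ℝ) < d - 1 := by simp [sub_pos, hd]
  norm_num [phi, Real.rpow_neg hpos.le, div_pow, mul_pow, Real.sq_sqrt hpos.le]
  field_simp
  ring

theorem phi_eigen_identity_general (d : ℕ) (hd : 3 ≤ d) (l : ℝ) :
    ((d : ℝ) + l ^ 2) * phi d l 0 - 2 * d * l * phi d l 1 + d * ((d : ℝ) - 1) * phi d l 2 = 0 := by
  have hd1 : 1 < d := by omega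
  have hd1' : (d : ℝ) - 1 ≠ 0 := by simp [sub_ne_zero, Nat.cast_eq_one, hd1.ne']
  rw [phi_zero (by omega), phi_one hd1, phi_two hd1]
  field_simp
  ring

/-- The covariance function of the Gaussian wave process satisfies the eigenvalue
identity `(d + l²) φ(0) - 2 d l φ(1) + d (d-1) φ(2) = 0`. -/
theorem phi_eigen_identity (d : ℕ) (hd : 3 ≤ d) (l : ℝ)
    (hl : l ∈ Set.Icc (-(2 * Real.sqrt ((d : ℝ) - 1))) (2 * Real.sqrt ((d : ℝ) - 1))) :
    ((d : ℝ) + l ^ 2) * phi d l 0 - 2 * d * l * phi d l 1 + d * ((d : ℝ) - 1) * phi d l 2 = 0 :=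
  phi_eigen_identity_general d hd l
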